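/- arXiv:0803.3590 — 2 statements merged into one kernel-verified Lean document; each statement's English description precedes it below -/
import Mathlib

section
/- For k ∈ ℤ fixed and ε → 0, the product ∏_{i=0}^{3·4^k/ε - 1} (4^k/2 + iε)/(4^k/2 + iε + ε) is bounded above by (1 - 2ε/(7·4^k))^{3·4^k/ε}, which converges to e^{-6/7} as ε → 0. -/
/-!
Each factor is `x / (x + ε)` with `x + ε ≤ a/2 + nε = 7a/2`, hence at most `1 - ε/(7a/2)`, which
bounds the product by the `n`-th power. The limit is the exponential limit `(1 + t/x)^x → exp t`
along `x = 3a/ε → ∞`, with `t = -6/7`.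
-/

open Real Filter Set Topology

lemma div_add_le_one_sub_div {x ε M : ℝ} (hx : 0 ≤ x) (hε : 0 < ε) (hM : x + ε ≤ M) :
    x / (x + ε) ≤ 1 - ε / M := by
  have hxε : 0 < x + ε := by positivity
  calc x / (x + ε) = 1 - ε / (x + ε) := by field_simp; ring
    _ ≤ 1 - ε / M := by gcongr

lemma prod_div_add_le_pow {b ε : ℝ} (hb : 0 ≤ b) (hε : 0 < ε) (n : ℕ) :
    ∏ i ∈ Finset.range n, (b + i * ε) / (b + i * ε + ε) ≤ (1 - ε / (b + n * ε)) ^ n := by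
  refine (Finset.prod_le_prod ?_ ?_).trans_eq (by rw [Finset.prod_const, Finset.card_range])
  · intro i _
    positivity
  · intro i hi
    have hin : (i : ℝ) + 1 ≤ n := by exact_mod_cast Finset.mem_range.mp hi
    exact div_add_le_one_sub_div (by positivity) hε (by nlinarith)

lemma tendsto_one_add_mul_rpow_div_nhdsGT_zero {c : ℝ} (hc : 0 < c) (t : ℝ) :
    Tendsto (fun ε : ℝ => (1 + t * ε) ^ (c / ε)) (𝓝[>] 0) (𝓝 (exp (c * t))) := by
  have hx : Tendsto (fun ε : ℝ => c / ε) (𝓝[>] 0) atTop := by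
    simpa only [div_eq_mul_inv] using tendsto_inv_nhdsGT_zero.const_mul_atTop hc
  refine ((tendsto_one_add_div_rpow_exp (c * t)).comp hx).congr' ?_
  filter_upwards [self_mem_nhdsWithin] with ε (hε : 0 < ε)
  simp only [Function.comp_apply]
  congr 2
  field_simp

theorem stmt8 (k : ℤ) (a : ℝ) (ha : a = (4:ℝ)^k) :
    (∀ ε : ℝ, 0 < ε → ∀ n : ℕ, (n : ℝ) * ε = 3 * a →
      ∏ i ∈ Finset.range n, (a/2 + i*ε)/(a/2 + i*ε + ε)
        ≤ (1 - 2*ε/(7*a))^(n : ℕ)) ∧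
    Tendsto (fun ε : ℝ => (1 - 2*ε/(7*a))^(3*a/ε))
      (nhdsWithin 0 (Ioi 0)) (nhds (Real.exp (-6/7))) := by
  have ha0 : 0 < a := ha ▸ zpow_pos (by norm_num) k
  refine ⟨fun ε hε n hn => ?_, ?_⟩
  · have hbound : a / 2 + n * ε = 7 * a / 2 := by linarith
    calc _ ≤ (1 - ε / (a / 2 + n * ε)) ^ n := prod_div_add_le_pow (by positivity) hε n
      _ = (1 - 2 * ε / (7 * a)) ^ n := by rw [hbound]; field_simp
  · convert tendsto_one_add_mul_rpow_div_nhdsGT_zero (by positivity : 0 < 3 * a) (-2 / (7 * a))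
      using 3 with ε
    · ring
    · field_simp; norm_num
end

section
/- Monotone coupling: let B : [0,∞) → ℝ be continuous and let X and X̄ be two attracted processes driven by the same B (solving X' = (1 + B - X)^{-γ} when below B, reflected at B), with initial distances d = B(0) - X(0) and d̄ = B(0) - X̄(0) satisfying 0 ≤ d < d̄. Then B(t) - X̄(t) ≥ B(t) - X(t) for all t ≥ 0, with equality for all t ≥ r whenever both distances vanish at time r. -/
open Real

/-- Remaining distance of the attracted particle to the (constant) level after
drifting for time `t`, starting at distance `b`; it is `0` once the level is reached. -/
noncomputable def Hdist (γ t b : ℝ) : ℝ :=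
  if (γ+1)*t ≤ (b+1)^(γ+1) - 1 then ((b+1)^(γ+1) - (γ+1)*t)^(1/(γ+1)) - 1 else 0

/-- Distance of the attracted process to the step function at the beginning of the
`i`-th constancy interval (just after the jump), for jump times `σ`, values `β`
and initial value `x₀`.  The distance is capped at `0` from below: the attracted
process never crosses the driving step function. -/
noncomputable def distSeq (γ : ℝ) (σ β : ℕ → ℝ) (x₀ : ℝ) : ℕ → ℝ
  | 0 => max (β 0 - x₀) 0
  | (i+1) => max (Hdist γ (σ (i+1) - σ i) (distSeq γ σ β x₀ i) + β (i+1) - β i) 0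

/-- Index of the constancy interval containing time `t`. -/
noncomputable def intervalIdx (σ : ℕ → ℝ) (t : ℝ) : ℕ := sInf {i : ℕ | t < σ (i+1)}

/-- The piecewise constant driving function. -/
noncomputable def stepB (σ β : ℕ → ℝ) (t : ℝ) : ℝ := β (intervalIdx σ t)

/-- The attracted process driven by the step function `(σ, β)`, started at `x₀`:
on each interval of constancy it follows the explicit solution of
`f' = (1 + B - f)^{-γ}`, capped at the level of the step function. -/
noncomputable def attracted (γ : ℝ) (σ β : ℕ → ℝ) (x₀ : ℝ) (t : ℝ) : ℝ :=
  β (intervalIdx σ t) -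
    Hdist γ (t - σ (intervalIdx σ t)) (distSeq γ σ β x₀ (intervalIdx σ t))

/-! The explicit flow `Hdist γ s b` is monotone in the starting distance `b`, so by induction over
the jump times the distance of `X̄` to `B` dominates that of `X`, on every interval of constancy.
Once a distance is `0` it stays `0` until the next jump; if both vanish at time `r`, the two
processes restart from the same distance after that jump, and the recursion defining the distances
keeps them equal from then on. -/

section Hdist

variable {γ : ℝ} (hγ : 0 < γ + 1)
include hγ

lemma Hdist_mono (s : ℝ) {b b' : ℝ} (hb : -1 ≤ b) (hbb : b ≤ b') :
    Hdist γ s b ≤ Hdist γ s b' := by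
  have hpow : (b+1)^(γ+1) ≤ (b'+1)^(γ+1) := rpow_le_rpow (by linarith) (by linarith) hγ.le
  have hexp : (0:ℝ) ≤ 1/(γ+1) := by positivity
  unfold Hdist
  split_ifs with h h'
  · have := rpow_le_rpow (by linarith)
      (by linarith : (b+1)^(γ+1) - (γ+1)*s ≤ (b'+1)^(γ+1) - (γ+1)*s) hexp
    linarith
  · exact absurd (by linarith) h'
  · linarith [one_le_rpow (by linarith : (1:ℝ) ≤ (b'+1)^(γ+1) - (γ+1)*s) hexp]
  · exact le_rfl

lemma Hdist_eq_zero_iff (s b : ℝ) :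
    Hdist γ s b = 0 ↔ (b+1)^(γ+1) - 1 ≤ (γ+1)*s := by
  unfold Hdist
  split_ifs with h
  · constructor
    · intro h0
      by_contra! hc
      have := one_lt_rpow (by linarith : (1:ℝ) < (b+1)^(γ+1) - (γ+1)*s)
        (by positivity : (0:ℝ) < 1/(γ+1))
      linarith
    · intro h1
      rw [show (b+1)^(γ+1) - (γ+1)*s = 1 by linarith, one_rpow, sub_self]
  · exact ⟨fun _ => by linarith, fun _ => rfl⟩

lemma Hdist_eq_zero_of_le {s s' b : ℝ} (h : Hdist γ s b = 0) (hss : s ≤ s') :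
    Hdist γ s' b = 0 :=
  (Hdist_eq_zero_iff hγ s' b).2 <|
    ((Hdist_eq_zero_iff hγ s b).1 h).trans (mul_le_mul_of_nonneg_left hss hγ.le)

end Hdist

section distSeq

lemma distSeq_nonneg (γ : ℝ) (σ β : ℕ → ℝ) (x₀ : ℝ) (i : ℕ) : 0 ≤ distSeq γ σ β x₀ i := by
  cases i <;> exact le_max_right _ _

variable {γ : ℝ} {σ β : ℕ → ℝ}

lemma distSeq_antitone (hγ : 0 < γ + 1) {x₀ xbar₀ : ℝ} (h : xbar₀ ≤ x₀) (i : ℕ) :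
    distSeq γ σ β x₀ i ≤ distSeq γ σ β xbar₀ i := by
  induction i with
  | zero => exact max_le_max (by linarith) le_rfl
  | succ n ih =>
    have := Hdist_mono hγ (σ (n+1) - σ n) (by linarith [distSeq_nonneg γ σ β x₀ n]) ih
    exact max_le_max (by linarith) le_rfl

lemma distSeq_succ_of_Hdist_eq_zero {x₀ : ℝ} {i : ℕ}
    (h : Hdist γ (σ (i+1) - σ i) (distSeq γ σ β x₀ i) = 0) :
    distSeq γ σ β x₀ (i+1) = max (β (i+1) - β i) 0 := by
  simp only [distSeq, h, zero_add]

lemma distSeq_eq_of_le {x₀ xbar₀ : ℝ} {i j : ℕ}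
    (h : distSeq γ σ β x₀ i = distSeq γ σ β xbar₀ i) (hij : i ≤ j) :
    distSeq γ σ β x₀ j = distSeq γ σ β xbar₀ j := by
  induction j, hij using Nat.le_induction with
  | base => exact h
  | succ n _ ih => simp only [distSeq, ih]

end distSeq

section intervalIdx

variable {σ : ℕ → ℝ} (hσtop : Filter.Tendsto σ Filter.atTop Filter.atTop)
include hσtop

lemma lt_intervalIdx_succ (t : ℝ) : t < σ (intervalIdx σ t + 1) :=
  Nat.sInf_mem ((hσtop.comp (Filter.tendsto_add_atTop_nat 1)).eventually_gt_atTop t).exists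

lemma intervalIdx_mono : Monotone (intervalIdx σ) :=
  fun _ t hrt => Nat.sInf_le (hrt.trans_lt (lt_intervalIdx_succ hσtop t))

end intervalIdx

lemma stepB_sub_attracted (γ : ℝ) (σ β : ℕ → ℝ) (x₀ t : ℝ) :
    stepB σ β t - attracted γ σ β x₀ t =
      Hdist γ (t - σ (intervalIdx σ t)) (distSeq γ σ β x₀ (intervalIdx σ t)) :=
  sub_sub_cancel _ _

lemma attracted_eq_of_Hdist_eq_zero {γ : ℝ} (hγ : 0 < γ + 1) {σ β : ℕ → ℝ}
    (hσtop : Filter.Tendsto σ Filter.atTop Filter.atTop) {x₀ xbar₀ r t : ℝ}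
    (h : Hdist γ (r - σ (intervalIdx σ r)) (distSeq γ σ β x₀ (intervalIdx σ r)) = 0)
    (hbar : Hdist γ (r - σ (intervalIdx σ r)) (distSeq γ σ β xbar₀ (intervalIdx σ r)) = 0)
    (hrt : r ≤ t) :
    attracted γ σ β x₀ t = attracted γ σ β xbar₀ t := by
  rcases (intervalIdx_mono hσtop hrt).eq_or_lt with hij | hij
  · rw [hij] at h hbar
    have hs : r - σ (intervalIdx σ t) ≤ t - σ (intervalIdx σ t) := by linarith
    simp only [attracted, Hdist_eq_zero_of_le hγ h hs, Hdist_eq_zero_of_le hγ hbar hs]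
  · have hs : r - σ (intervalIdx σ r) ≤ σ (intervalIdx σ r + 1) - σ (intervalIdx σ r) := by
      linarith [lt_intervalIdx_succ hσtop r]
    have hnext :
        distSeq γ σ β x₀ (intervalIdx σ r + 1) = distSeq γ σ β xbar₀ (intervalIdx σ r + 1) := by
      rw [distSeq_succ_of_Hdist_eq_zero (Hdist_eq_zero_of_le hγ h hs),
        distSeq_succ_of_Hdist_eq_zero (Hdist_eq_zero_of_le hγ hbar hs)]
    simp only [attracted, distSeq_eq_of_le hnext hij]

theorem stmt19_general (γ : ℝ) (hγ : 0 < γ)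
    (σ β : ℕ → ℝ)
    (hσtop : Filter.Tendsto σ Filter.atTop Filter.atTop)
    (x₀ xbar₀ : ℝ) (h₀ : xbar₀ ≤ x₀) :
    (∀ t : ℝ, 0 ≤ t →
      stepB σ β t - attracted γ σ β x₀ t
        ≤ stepB σ β t - attracted γ σ β xbar₀ t) ∧
    (∀ r : ℝ, 0 ≤ r →
      stepB σ β r - attracted γ σ β x₀ r = 0 →
      stepB σ β r - attracted γ σ β xbar₀ r = 0 →
      ∀ t : ℝ, r ≤ t → attracted γ σ β x₀ t = attracted γ σ β xbar₀ t) := by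
  have hγ1 : 0 < γ + 1 := by linarith
  refine ⟨fun t _ => ?_, fun r _ h hbar t hrt => ?_⟩
  · rw [stepB_sub_attracted, stepB_sub_attracted]
    exact Hdist_mono hγ1 _ (by linarith [distSeq_nonneg γ σ β x₀ (intervalIdx σ t)])
      (distSeq_antitone hγ1 h₀ _)
  · rw [stepB_sub_attracted] at h hbar
    exact attracted_eq_of_Hdist_eq_zero hγ1 hσtop h hbar hrt

theorem stmt19 (γ : ℝ) (hγ : 0 < γ)
    (σ β : ℕ → ℝ) (hσ0 : σ 0 = 0) (hσ : StrictMono σ)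
    (hσtop : Filter.Tendsto σ Filter.atTop Filter.atTop)
    (x₀ xbar₀ : ℝ) (h₀ : xbar₀ ≤ x₀) (h₀' : x₀ ≤ β 0) :
    (∀ t : ℝ, 0 ≤ t →
      stepB σ β t - attracted γ σ β x₀ t
        ≤ stepB σ β t - attracted γ σ β xbar₀ t) ∧
    (∀ r : ℝ, 0 ≤ r →
      stepB σ β r - attracted γ σ β x₀ r = 0 →
      stepB σ β r - attracted γ σ β xbar₀ r = 0 →
      ∀ t : ℝ, r ≤ t → attracted γ σ β x₀ t = attracted γ σ β xbar₀ t) :=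
  stmt19_general γ hγ σ β hσtop x₀ xbar₀ h₀
end
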